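/- Let n be a positive integer and let a, b be weak compositions of length n. Then the Young fundamental particle yfp_a equals the fundamental particle fp_b if and only if a = b and a has no zero part adjacent to a part of size at least 2 (i.e., there is no 1 ≤ i < n with a_i = 0 and a_{i+1} ≥ 2, nor with a_i ≥ 2 and a_{i+1} = 0); moreover, for such a, yfp_a = fp_a = x^a. -/

import Mathlib

open scoped Classical
open MvPolynomial

namespace PaperYR

/-- A filling of a diagram with `m` rows (0-based, indexed from the bottom), where row `i`
has `c i` boxes (0-based column indices), with entries in `{1,…,n}` encoded as `Fin n`
(the value `e : Fin n` encodes the entry `e+1`). -/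
def Filling (m n : ℕ) (c : Fin m → ℕ) : Type :=
  ((i : Fin m) × Fin (c i)) → Fin n

noncomputable instance (m n : ℕ) (c : Fin m → ℕ) : Fintype (Filling m n c) := by
  unfold Filling; infer_instance

/-- The monomial `x^{wt T}` of a filling: the product over all boxes of the variable
indexed by the entry of the box. -/
noncomputable def fmono {m n : ℕ} {c : Fin m → ℕ} (T : Filling m n c) :
    MvPolynomial (Fin n) ℤ :=
  ∏ b : (i : Fin m) × Fin (c i), X (T b)

/-- The monomial of a filling, ignoring the boxes of column `0` (the basement column). -/
noncomputable def fmonoNB {m n : ℕ} {c : Fin m → ℕ} (T : Filling m n c) :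
    MvPolynomial (Fin n) ℤ :=
  ∏ b ∈ Finset.univ.filter (fun b : (i : Fin m) × Fin (c i) => (b.2 : ℕ) ≠ 0), X (T b)

noncomputable def genfun {m n : ℕ} (c : Fin m → ℕ) (P : Filling m n c → Prop) :
    MvPolynomial (Fin n) ℤ :=
  ∑ T ∈ Finset.univ.filter P, fmono T

noncomputable def genfunNB {n : ℕ} (c : Fin n → ℕ) (P : Filling n n c → Prop) :
    MvPolynomial (Fin n) ℤ :=
  ∑ T ∈ Finset.univ.filter P, fmonoNB T

section Preds

variable {m n : ℕ} {c : Fin m → ℕ}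

def RowsWeakIncr (T : Filling m n c) : Prop :=
  ∀ (i : Fin m) (j j' : Fin (c i)), j ≤ j' → T ⟨i, j⟩ ≤ T ⟨i, j'⟩

def RowsWeakDecr (T : Filling m n c) : Prop :=
  ∀ (i : Fin m) (j j' : Fin (c i)), j ≤ j' → T ⟨i, j'⟩ ≤ T ⟨i, j⟩

/-- Every entry of a lower row is strictly smaller than every entry of any higher row. -/
def RowsSeparated (T : Filling m n c) : Prop :=
  ∀ (i i' : Fin m), i < i' → ∀ (j : Fin (c i)) (j' : Fin (c i')), T ⟨i, j⟩ < T ⟨i', j'⟩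

def RowsConstant (T : Filling m n c) : Prop :=
  ∀ (i : Fin m) (j j' : Fin (c i)), T ⟨i, j⟩ = T ⟨i, j'⟩

def FirstColStrictIncr (T : Filling m n c) : Prop :=
  ∀ (i i' : Fin m), i < i' → ∀ (h : 0 < c i) (h' : 0 < c i'), T ⟨i, ⟨0, h⟩⟩ < T ⟨i', ⟨0, h'⟩⟩

def ColumnsDistinct (T : Filling m n c) : Prop :=
  ∀ (i i' : Fin m), i ≠ i' → ∀ (j : Fin (c i)) (j' : Fin (c i')),
    (j : ℕ) = (j' : ℕ) → T ⟨i, j⟩ ≠ T ⟨i', j'⟩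

/-- Columns strictly increase from bottom to top. -/
def ColsStrictIncr (T : Filling m n c) : Prop :=
  ∀ (i i' : Fin m), i < i' → ∀ (j : Fin (c i)) (j' : Fin (c i')),
    (j : ℕ) = (j' : ℕ) → T ⟨i, j⟩ < T ⟨i', j'⟩

/-- Every entry of row `i` (1-based: row `i+1`) is at most its row index. -/
def FlagUpper (T : Filling m n c) : Prop :=
  ∀ (i : Fin m) (j : Fin (c i)), (T ⟨i, j⟩ : ℕ) ≤ (i : ℕ)

/-- Every entry of row `i` (1-based: row `i+1`) is at least its row index. -/
def FlagLower (T : Filling m n c) : Prop :=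
  ∀ (i : Fin m) (j : Fin (c i)), (i : ℕ) ≤ (T ⟨i, j⟩ : ℕ)

/-- Every Type A and Type B triple is an inversion triple. -/
def TriplesAB (T : Filling m n c) : Prop :=
  (∀ (i i' : Fin m), i < i' → c i' ≤ c i →
    ∀ (k : ℕ) (h1 : k + 1 < c i) (h2 : k + 1 < c i'),
      ¬ (T ⟨i', ⟨k + 1, h2⟩⟩ ≤ T ⟨i, ⟨k, Nat.lt_of_succ_lt h1⟩⟩ ∧
         T ⟨i, ⟨k + 1, h1⟩⟩ ≤ T ⟨i', ⟨k + 1, h2⟩⟩)) ∧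
  (∀ (i i' : Fin m), i < i' → c i < c i' →
    ∀ (k : ℕ) (h1 : k + 1 < c i') (h2 : k < c i),
      ¬ (T ⟨i, ⟨k, h2⟩⟩ ≤ T ⟨i', ⟨k, Nat.lt_of_succ_lt h1⟩⟩ ∧
         T ⟨i', ⟨k + 1, h1⟩⟩ ≤ T ⟨i, ⟨k, h2⟩⟩))

/-- Every Type I and Type II Young triple is a Young inversion triple. -/
def TriplesYoung (T : Filling m n c) : Prop :=
  (∀ (i i' : Fin m), i < i' → c i ≤ c i' →
    ∀ (k : ℕ) (h1 : k + 1 < c i') (h2 : k + 1 < c i),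
      ¬ (T ⟨i, ⟨k + 1, h2⟩⟩ ≤ T ⟨i', ⟨k + 1, h1⟩⟩ ∧
         T ⟨i', ⟨k, Nat.lt_of_succ_lt h1⟩⟩ ≤ T ⟨i, ⟨k + 1, h2⟩⟩)) ∧
  (∀ (i i' : Fin m), i < i' → c i' < c i →
    ∀ (k : ℕ) (h1 : k + 1 < c i) (h2 : k < c i'),
      ¬ (T ⟨i', ⟨k, h2⟩⟩ ≤ T ⟨i, ⟨k + 1, h1⟩⟩ ∧
         T ⟨i, ⟨k, Nat.lt_of_succ_lt h1⟩⟩ ≤ T ⟨i', ⟨k, h2⟩⟩))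

end Preds

/-- The first entry of each nonempty row equals its row index. -/
def FirstEntryRowIndex {n : ℕ} {c : Fin n → ℕ} (T : Filling n n c) : Prop :=
  ∀ (i : Fin n) (h : 0 < c i), T ⟨i, ⟨0, h⟩⟩ = i

/-! ### Polynomials indexed by weak compositions (of length `n`, in `n` variables) -/

/-- The key polynomial `κ_a`: generating function of `KSSF(a)`, fillings of `D(rev a)`
with a basement column whose entry in row `i` (1-based) is `n+1-i`. -/
noncomputable def keyPoly (n : ℕ) (a : Fin n → ℕ) : MvPolynomial (Fin n) ℤ :=
  genfunNB (fun i => a i.rev + 1) (fun T =>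
    (∀ i : Fin n, T ⟨i, ⟨0, Nat.succ_pos _⟩⟩ = i.rev) ∧
    RowsWeakDecr T ∧ ColumnsDistinct T ∧ TriplesAB T)

/-- The Young key polynomial `YK_a`: generating function of `YKSSF(a)`, fillings of
`D(rev a)` with a basement column whose entry in row `i` (1-based) is `i`. -/
noncomputable def youngKey (n : ℕ) (a : Fin n → ℕ) : MvPolynomial (Fin n) ℤ :=
  genfunNB (fun i => a i.rev + 1) (fun T =>
    (∀ i : Fin n, T ⟨i, ⟨0, Nat.succ_pos _⟩⟩ = i) ∧
    RowsWeakIncr T ∧ ColumnsDistinct T ∧ TriplesYoung T)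

/-- The Demazure atom `A_a`: generating function of `ASSF(a)`. -/
noncomputable def atom (n : ℕ) (a : Fin n → ℕ) : MvPolynomial (Fin n) ℤ :=
  genfun (n := n) a (fun T =>
    RowsWeakDecr T ∧ ColumnsDistinct T ∧ FirstEntryRowIndex T ∧ TriplesAB T)

/-- The Young atom `YA_a`: generating function of `YASSF(a)`. -/
noncomputable def youngAtom (n : ℕ) (a : Fin n → ℕ) : MvPolynomial (Fin n) ℤ :=
  genfun (n := n) a (fun T =>
    RowsWeakIncr T ∧ ColumnsDistinct T ∧ FirstEntryRowIndex T ∧ TriplesYoung T)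

/-- The fundamental slide polynomial `fs_a`: generating function of `FF(a)`. -/
noncomputable def fslide (n : ℕ) (a : Fin n → ℕ) : MvPolynomial (Fin n) ℤ :=
  genfun (n := n) a (fun T => RowsWeakDecr T ∧ FlagUpper T ∧ RowsSeparated T)

/-- The monomial slide polynomial `ms_a`: generating function of `MF(a)`. -/
noncomputable def mslide (n : ℕ) (a : Fin n → ℕ) : MvPolynomial (Fin n) ℤ :=
  genfun (n := n) a (fun T => RowsWeakDecr T ∧ FlagUpper T ∧ RowsSeparated T ∧ RowsConstant T)

/-- The Young fundamental slide polynomial `yfs_a`: generating function of `YFF(a)`. -/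
noncomputable def yfslide (n : ℕ) (a : Fin n → ℕ) : MvPolynomial (Fin n) ℤ :=
  genfun (n := n) a (fun T => RowsWeakIncr T ∧ FlagLower T ∧ RowsSeparated T)

/-- The Young monomial slide polynomial `yms_a`: generating function of `YMF(a)`. -/
noncomputable def ymslide (n : ℕ) (a : Fin n → ℕ) : MvPolynomial (Fin n) ℤ :=
  genfun (n := n) a (fun T => RowsWeakIncr T ∧ FlagLower T ∧ RowsSeparated T ∧ RowsConstant T)

/-- The fundamental particle `fp_a`: generating function of `LF(a)`. -/
noncomputable def fparticle (n : ℕ) (a : Fin n → ℕ) : MvPolynomial (Fin n) ℤ :=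
  genfun (n := n) a (fun T =>
    RowsWeakDecr T ∧ ColumnsDistinct T ∧ FirstEntryRowIndex T ∧ TriplesAB T ∧ RowsSeparated T)

/-- The Young fundamental particle `yfp_a`: generating function of `YLF(a)`. -/
noncomputable def yfparticle (n : ℕ) (a : Fin n → ℕ) : MvPolynomial (Fin n) ℤ :=
  genfun (n := n) a (fun T =>
    RowsWeakIncr T ∧ ColumnsDistinct T ∧ FirstEntryRowIndex T ∧ TriplesYoung T ∧ RowsSeparated T)

/-- The quasi-key polynomial `QK_a`: generating function of `QF(a)`. -/
noncomputable def quasiKey (n : ℕ) (a : Fin n → ℕ) : MvPolynomial (Fin n) ℤ :=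
  genfun (n := n) a (fun T =>
    RowsWeakDecr T ∧ FlagUpper T ∧ FirstColStrictIncr T ∧ ColumnsDistinct T ∧ TriplesAB T)

/-- The Young quasi-key polynomial `YQK_a`: generating function of `YQF(a)`. -/
noncomputable def youngQuasiKey (n : ℕ) (a : Fin n → ℕ) : MvPolynomial (Fin n) ℤ :=
  genfun (n := n) a (fun T =>
    RowsWeakIncr T ∧ FlagLower T ∧ FirstColStrictIncr T ∧ ColumnsDistinct T ∧ TriplesYoung T)

/-! ### Polynomials indexed by compositions and partitions -/

/-- The shape of a composition (or partition) given as a list: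
row `i` (0-based, from the bottom) has `α.get i` boxes. -/
def cshape (α : List ℕ) : Fin α.length → ℕ := fun i => α.get i

/-- The fundamental quasisymmetric polynomial `F_α(x_1,…,x_n)`, as the generating function
of fundamental reverse composition tableaux. -/
noncomputable def Fqs (n : ℕ) (α : List ℕ) : MvPolynomial (Fin n) ℤ :=
  genfun (n := n) (cshape α) (fun T => RowsWeakDecr T ∧ RowsSeparated T)

/-- The monomial quasisymmetric polynomial `M_α(x_1,…,x_n)`, as the generating function
of monomial reverse composition tableaux. -/
noncomputable def Mqs (n : ℕ) (α : List ℕ) : MvPolynomial (Fin n) ℤ :=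
  genfun (n := n) (cshape α) (fun T => RowsWeakDecr T ∧ RowsSeparated T ∧ RowsConstant T)

/-- The generating function of fundamental Young composition tableaux of shape `α`. -/
noncomputable def FqsYoung (n : ℕ) (α : List ℕ) : MvPolynomial (Fin n) ℤ :=
  genfun (n := n) (cshape α) (fun T => RowsWeakIncr T ∧ RowsSeparated T)

/-- The generating function of monomial Young composition tableaux of shape `α`. -/
noncomputable def MqsYoung (n : ℕ) (α : List ℕ) : MvPolynomial (Fin n) ℤ :=
  genfun (n := n) (cshape α) (fun T => RowsWeakIncr T ∧ RowsSeparated T ∧ RowsConstant T)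

/-- The quasisymmetric Schur polynomial `QS_α(x_1,…,x_n)`: generating function of `RCT(α)`. -/
noncomputable def QSpoly (n : ℕ) (α : List ℕ) : MvPolynomial (Fin n) ℤ :=
  genfun (n := n) (cshape α) (fun T => RowsWeakDecr T ∧ FirstColStrictIncr T ∧ TriplesAB T)

/-- The Young quasisymmetric Schur polynomial `YQS_α(x_1,…,x_n)`:
generating function of `YCT(α)`. -/
noncomputable def YQSpoly (n : ℕ) (α : List ℕ) : MvPolynomial (Fin n) ℤ :=
  genfun (n := n) (cshape α) (fun T => RowsWeakIncr T ∧ FirstColStrictIncr T ∧ TriplesYoung T)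

/-- The Schur polynomial `s_λ(x_1,…,x_n)`: generating function of `SSYT_n(λ)`. -/
noncomputable def schurPoly (n : ℕ) (lam : List ℕ) : MvPolynomial (Fin n) ℤ :=
  genfun (n := n) (cshape lam) (fun T => RowsWeakIncr T ∧ ColsStrictIncr T)

/-! ### Words, Knuth equivalence, keys, compatible sequences -/

/-- Knuth equivalence: the smallest equivalence relation on words generated by the two
elementary Knuth moves. -/
inductive Knuth : List ℕ → List ℕ → Prop
  | rel1 (u v : List ℕ) (x y z : ℕ) (h1 : x ≤ y) (h2 : y < z) :
      Knuth (u ++ x :: z :: y :: v) (u ++ z :: x :: y :: v)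
  | rel2 (u v : List ℕ) (x y z : ℕ) (h1 : x < y) (h2 : y ≤ z) :
      Knuth (u ++ y :: x :: z :: v) (u ++ y :: z :: x :: v)
  | refl (w : List ℕ) : Knuth w w
  | symm {w w' : List ℕ} : Knuth w w' → Knuth w' w
  | trans {w w' w'' : List ℕ} : Knuth w w' → Knuth w' w'' → Knuth w w''

/-- `f(w)`: replace each letter `i` of `w` by `n+1-i`. -/
def fword (n : ℕ) (w : List ℕ) : List ℕ := w.map (fun x => n + 1 - x)

/-- `frev(w) = f(rev(w))`. -/
def frev (n : ℕ) (w : List ℕ) : List ℕ := fword n w.reverse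

/-- The largest part of the weak composition `a`. -/
def maxPart (n : ℕ) (a : Fin n → ℕ) : ℕ := Finset.univ.sup a

/-- The entries of column `j+1` (0-based `j`) of the key `key(a)`, read from top to bottom
(i.e., in decreasing order): the 1-based row indices `i` with `a_i ≥ j+1`. -/
def keyColWord (n : ℕ) (a : Fin n → ℕ) (j : ℕ) : List ℕ :=
  (((List.finRange n).filter (fun i => decide (j + 1 ≤ a i))).reverse).map (fun i => (i : ℕ) + 1)

/-- `col(key(a))`: the column word of `key(a)`, columns read left to right. -/
def colKey (n : ℕ) (a : Fin n → ℕ) : List ℕ :=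
  (List.range (maxPart n a)).flatMap (fun j => keyColWord n a j)

/-- `col_R(key(a))`: the right-to-left column word of `key(a)`. -/
def colRKey (n : ℕ) (a : Fin n → ℕ) : List ℕ :=
  ((List.range (maxPart n a)).reverse).flatMap (fun j => keyColWord n a j)

/-- `w` is a `b`-compatible word (alphabet `{1,…,n}`). -/
def Compatible (n : ℕ) (b w : List ℕ) : Prop :=
  w.length = b.length ∧
  (∀ x ∈ w, 1 ≤ x ∧ x ≤ n) ∧
  (∀ k : ℕ, k + 1 < w.length → w.getD k 0 ≤ w.getD (k + 1) 0) ∧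
  (∀ k : ℕ, k + 1 < b.length → b.getD k 0 < b.getD (k + 1) 0 → w.getD k 0 < w.getD (k + 1) 0) ∧
  (∀ k : ℕ, k < b.length → w.getD k 0 ≤ b.getD k 0)

/-- `w` is the entrywise maximal `b`-compatible word. -/
def IsMaxCompat (n : ℕ) (b w : List ℕ) : Prop :=
  Compatible n b w ∧ ∀ w' : List ℕ, Compatible n b w' → List.Forall₂ (· ≤ ·) w' w

/-! ### Column word factorization, column-frank words, and left keys -/

/-- Split off the longest strictly decreasing prefix of a word. -/
def decRunSplit : List ℕ → List ℕ × List ℕ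
  | [] => ([], [])
  | [x] => ([x], [])
  | x :: y :: r =>
    if y < x then
      let p := decRunSplit (y :: r)
      (x :: p.1, p.2)
    else ([x], y :: r)

def cwfAux : ℕ → List ℕ → List (List ℕ)
  | 0, _ => []
  | _, [] => []
  | Nat.succ fuel, x :: r =>
    let p := decRunSplit (x :: r)
    p.1 :: cwfAux fuel p.2

/-- The column word factorization of `v`: its decomposition into maximal consecutive
strictly decreasing subwords. -/
def cwf (v : List ℕ) : List (List ℕ) := cwfAux v.length v

/-- The column form of `v`: the lengths of the subwords in its column word factorization. -/
def colform (v : List ℕ) : List ℕ := (cwf v).map List.length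

/-- The first subword in the column word factorization of `v`. -/
def firstRun (v : List ℕ) : List ℕ := (cwf v).headD []

/-- The nonzero parts of the conjugate of `sort(a)`. -/
noncomputable def conjParts (n : ℕ) (a : Fin n → ℕ) : List ℕ :=
  (List.range (maxPart n a)).map
    (fun j => (Finset.univ.filter (fun i : Fin n => j + 1 ≤ a i)).card)

/-- `v` is column-frank (for a tableau of shape `sort(a)`): its column form is a
rearrangement of the nonzero parts of the conjugate partition. -/
def ColumnFrank (n : ℕ) (a : Fin n → ℕ) (v : List ℕ) : Prop :=
  List.Perm (colform v) (conjParts n a)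

/-- The column word `col(T)` of a filling `T` (columns top to bottom, left to right),
with the `Fin n`-encoded entries converted to the 1-based letters. -/
def colWordT {n : ℕ} {c : Fin n → ℕ} (T : Filling n n c) : List ℕ :=
  (List.range (Finset.univ.sup c)).flatMap (fun j =>
    ((List.finRange n).reverse).filterMap (fun i =>
      if h : j < c i then some ((T ⟨i, ⟨j, h⟩⟩ : ℕ) + 1) else none))

/-- The number of entries in column `j+1` of `key(a)`. -/
noncomputable def keyColCard (n : ℕ) (a : Fin n → ℕ) (j : ℕ) : ℕ :=
  (Finset.univ.filter (fun i : Fin n => j + 1 ≤ a i)).card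

/-- The set of (1-based) entries in column `j+1` of `key(a)`. -/
noncomputable def keyColFinset (n : ℕ) (a : Fin n → ℕ) (j : ℕ) : Finset ℕ :=
  (Finset.univ.filter (fun i : Fin n => j + 1 ≤ a i)).image (fun i => (i : ℕ) + 1)

/-- `K₋(T) = key(a)`: for each column `j` of `key(a)`, there is a column-frank word
Knuth equivalent to `col(T)` whose first subword has length `λ'_j` and whose first
subword's set of letters is the entry set of column `j` of `key(a)`. -/
def LeftKeyEq (n : ℕ) (a : Fin n → ℕ) {c : Fin n → ℕ} (T : Filling n n c) : Prop :=
  ∀ j < maxPart n a, ∃ v : List ℕ,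
    Knuth v (colWordT T) ∧ ColumnFrank n a v ∧
    (firstRun v).length = keyColCard n a j ∧
    (firstRun v).toFinset = keyColFinset n a j

/-- `K₋(T) ≥ key(a)` entrywise. -/
def LeftKeyGe (n : ℕ) (a : Fin n → ℕ) {c : Fin n → ℕ} (T : Filling n n c) : Prop :=
  ∀ j < maxPart n a, ∃ v : List ℕ,
    Knuth v (colWordT T) ∧ ColumnFrank n a v ∧
    (firstRun v).length = keyColCard n a j ∧
    List.Forall₂ (fun p q => q ≤ p) (((firstRun v).toFinset).sort (· ≤ ·))
      ((keyColFinset n a j).sort (· ≤ ·))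

/-- `sort(a)`: the weakly decreasing rearrangement of `a`. -/
noncomputable def sortDesc (n : ℕ) (a : Fin n → ℕ) : Fin n → ℕ :=
  fun i => (a ∘ Tuple.sort a) i.rev

/-- The word consisting of `a_1` copies of `1`, then `a_2` copies of `2`, etc. -/
def bword (n : ℕ) (a : Fin n → ℕ) : List ℕ :=
  (List.finRange n).flatMap (fun i => List.replicate (a i) ((i : ℕ) + 1))

/-! ### Divided differences and permutations -/

/-- The variable `x_i` (1-based); junk value `0` out of range. -/
noncomputable def xvar (n : ℕ) (i : ℕ) : MvPolynomial (Fin n) ℤ :=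
  if h : 1 ≤ i ∧ i ≤ n then X (⟨i - 1, by omega⟩ : Fin n) else 0

/-- `s_i(f)`: exchange the variables `x_i` and `x_{i+1}` (1-based). -/
noncomputable def swapVars (n : ℕ) (i : ℕ) (f : MvPolynomial (Fin n) ℤ) :
    MvPolynomial (Fin n) ℤ :=
  if h : 1 ≤ i ∧ i < n then
    rename (Equiv.swap (⟨i - 1, by omega⟩ : Fin n) (⟨i, h.2⟩ : Fin n)) f
  else f

/-- The divided difference `∂_i(f)`: the unique polynomial `g` with
`(x_i - x_{i+1}) * g = f - s_i(f)`. -/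
noncomputable def ddiff (n : ℕ) (i : ℕ) (f : MvPolynomial (Fin n) ℤ) :
    MvPolynomial (Fin n) ℤ :=
  if h : ∃ g, (xvar n i - xvar n (i + 1)) * g = f - swapVars n i f then h.choose else 0

/-- `π_i(f) = ∂_i(x_i f)`. -/
noncomputable def piOp (n : ℕ) (i : ℕ) (f : MvPolynomial (Fin n) ℤ) :
    MvPolynomial (Fin n) ℤ :=
  ddiff n i (xvar n i * f)

/-- `π̂_i(f) = -∂_i(x_{i+1} f)`. -/
noncomputable def piHat (n : ℕ) (i : ℕ) (f : MvPolynomial (Fin n) ℤ) :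
    MvPolynomial (Fin n) ℤ :=
  - ddiff n i (xvar n (i + 1) * f)

/-- The automorphism `I` of `ℤ[x_1,…,x_n]` with `I(x_j) = x_{n+1-j}`. -/
noncomputable def Iauto (n : ℕ) (f : MvPolynomial (Fin n) ℤ) : MvPolynomial (Fin n) ℤ :=
  rename Fin.rev f

/-- The adjacent transposition `s_i = (i, i+1)` (1-based) of `Fin n`. -/
def adjSwap (n : ℕ) (i : ℕ) : Equiv.Perm (Fin n) :=
  if h : 1 ≤ i ∧ i < n then Equiv.swap (⟨i - 1, by omega⟩ : Fin n) (⟨i, h.2⟩ : Fin n) else 1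

/-- The permutation `s_{i_1} s_{i_2} ⋯ s_{i_r}` determined by a word of 1-based indices,
composed so that `w(m) = s_{i_1}(s_{i_2}(⋯ s_{i_r}(m)⋯))`. -/
def wordPerm (n : ℕ) (l : List ℕ) : Equiv.Perm (Fin n) := (l.map (adjSwap n)).prod

/-- The (Coxeter) length of a permutation: the minimal length of a word of adjacent
transpositions expressing it. -/
noncomputable def permLen (n : ℕ) (w : Equiv.Perm (Fin n)) : ℕ :=
  sInf {r : ℕ | ∃ l : List ℕ, (∀ i ∈ l, 1 ≤ i ∧ i < n) ∧ wordPerm n l = w ∧ l.length = r}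

/-- `l` is a reduced word for `w` (1-based letters). -/
def IsReducedWord (n : ℕ) (w : Equiv.Perm (Fin n)) (l : List ℕ) : Prop :=
  (∀ i ∈ l, 1 ≤ i ∧ i < n) ∧ wordPerm n l = w ∧ l.length = permLen n w


/-! ### Auxiliary development for Statement 18 -/

section Aux18

open Finset

variable {n : ℕ}

/-- The weight of a filling, as a finitely supported function. -/
noncomputable def wgt {m n : ℕ} {c : Fin m → ℕ} (T : Filling m n c) : Fin n →₀ ℕ :=
  ∑ b : (i : Fin m) × Fin (c i), Finsupp.single (T b) 1

lemma wgt_apply {m n : ℕ} {c : Fin m → ℕ} (T : Filling m n c) (v : Fin n) :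
    wgt T v = ((Finset.univ.filter
      (fun b : (i : Fin m) × Fin (c i) => T b = v)).card : ℕ) := by
  classical
  rw [Finset.card_filter, wgt, Finsupp.finset_sum_apply]
  exact Finset.sum_congr rfl fun b _ => by rw [Finsupp.single_apply]; congr

lemma prod_X_monomial {σ β : Type*} [DecidableEq β] (s : Finset β) (f : β → σ) :
    (∏ b ∈ s, (MvPolynomial.X (f b) : MvPolynomial σ ℤ)) =
      MvPolynomial.monomial (∑ b ∈ s, Finsupp.single (f b) 1) 1 := by
  classical
  induction s using Finset.induction_on with
  | empty => simp
  | insert _ _ hx ih =>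
      rw [Finset.prod_insert hx, Finset.sum_insert hx, ih]
      rw [show (MvPolynomial.X (f _) : MvPolynomial σ ℤ)
        = MvPolynomial.monomial (Finsupp.single (f _) 1) 1 from
          ((pow_one _).symm.trans (MvPolynomial.X_pow_eq_monomial)),
        MvPolynomial.monomial_mul, one_mul]

lemma fmono_eq {m n : ℕ} {c : Fin m → ℕ} (T : Filling m n c) :
    fmono T = MvPolynomial.monomial (wgt T) 1 := by
  classical
  exact prod_X_monomial _ _

/-- Partial sums of a composition. -/
def psum (f : Fin n → ℕ) (k : ℕ) : ℕ := ∑ i : Fin n, if (i : ℕ) < k then f i else 0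

lemma psum_succ (f : Fin n → ℕ) (k : ℕ) (hk : k < n) :
    psum f (k + 1) = psum f k + f ⟨k, hk⟩ := by
  unfold psum
  have h : ∀ i : Fin n, (if (i : ℕ) < k + 1 then f i else 0)
      = (if (i : ℕ) < k then f i else 0) + (if i = ⟨k, hk⟩ then f i else 0) := by
    intro i
    simp only [Fin.ext_iff]
    split_ifs <;> omega
  simp only [h]
  rw [Finset.sum_add_distrib, Finset.sum_ite_eq' Finset.univ ⟨k, hk⟩ f,
    if_pos (Finset.mem_univ _)]

lemma card_boxes (c : Fin n → ℕ) (p : Fin n → Prop) [DecidablePred p] :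
    ((Finset.univ : Finset ((i : Fin n) × Fin (c i))).filter (fun b => p b.1)).card
      = ∑ i : Fin n, if p i then c i else 0 := by
  rw [Finset.card_filter, ← Finset.univ_sigma_univ, Finset.sum_sigma]
  refine Finset.sum_congr rfl fun i _ => ?_
  split_ifs with h <;> simp

/-- The number of boxes whose entry is (strictly) below `k`. -/
noncomputable def ew {c : Fin n → ℕ} (T : Filling n n c) (k : ℕ) : ℕ :=
  ((Finset.univ : Finset ((i : Fin n) × Fin (c i))).filter
    (fun b => ((T b : Fin n) : ℕ) < k)).card

lemma psum_wgt {c : Fin n → ℕ} (T : Filling n n c) (k : ℕ) :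
    psum (fun v => wgt T v) k = ew T k := by
  classical
  unfold psum ew
  rw [Finset.card_filter]
  have h1 : ∀ v : Fin n, (if (v : ℕ) < k then wgt T v else 0)
      = ∑ b : (i : Fin n) × Fin (c i),
          if T b = v then (if (v : ℕ) < k then 1 else 0) else 0 := by
    intro v
    split_ifs with h
    · rw [wgt_apply, Finset.card_filter]; congr; funext b; congr
    · simp
  simp only [h1]
  rw [Finset.sum_comm]
  refine Finset.sum_congr rfl fun b _ => ?_
  rw [Finset.sum_ite_eq Finset.univ (T b) (fun v => if (v : ℕ) < k then 1 else 0),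
    if_pos (Finset.mem_univ _)]

lemma entry_ge {c : Fin n → ℕ} {T : Filling n n c} (h1 : RowsWeakIncr T)
    (h2 : FirstEntryRowIndex T) (i : Fin n) (j : Fin (c i)) :
    (i : ℕ) ≤ (T ⟨i, j⟩ : ℕ) := by
  have hp : 0 < c i := Nat.lt_of_le_of_lt (Nat.zero_le _) j.isLt
  have h := h1 i ⟨0, hp⟩ j (by simp [Fin.le_def])
  rw [h2 i hp] at h
  exact h

lemma entry_le {c : Fin n → ℕ} {T : Filling n n c} (h1 : RowsWeakDecr T)
    (h2 : FirstEntryRowIndex T) (i : Fin n) (j : Fin (c i)) :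
    (T ⟨i, j⟩ : ℕ) ≤ (i : ℕ) := by
  have hp : 0 < c i := Nat.lt_of_le_of_lt (Nat.zero_le _) j.isLt
  have h := h1 i ⟨0, hp⟩ j (by simp [Fin.le_def])
  rw [h2 i hp] at h
  exact h

lemma sep_colsDistinct {c : Fin n → ℕ} {T : Filling n n c} (h : RowsSeparated T) :
    ColumnsDistinct T := by
  intro i i' hne j j' _
  rcases hne.lt_or_gt with h' | h'
  · exact ne_of_lt (h i i' h' j j')
  · exact (ne_of_lt (h i' i h' j' j)).symm

lemma sep_triplesAB {c : Fin n → ℕ} {T : Filling n n c} (h : RowsSeparated T) :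
    TriplesAB T := by
  constructor
  · intro i i' hlt _ k h1 h2 hcon
    exact absurd (h i i' hlt ⟨k, Nat.lt_of_succ_lt h1⟩ ⟨k + 1, h2⟩) (not_lt.mpr hcon.1)
  · intro i i' hlt _ k h1 h2 hcon
    exact absurd (h i i' hlt ⟨k, h2⟩ ⟨k + 1, h1⟩) (not_lt.mpr hcon.2)

lemma sep_triplesYoung {c : Fin n → ℕ} {T : Filling n n c} (h : RowsSeparated T) :
    TriplesYoung T := by
  constructor
  · intro i i' hlt _ k h1 h2 hcon
    exact absurd (h i i' hlt ⟨k + 1, h2⟩ ⟨k, Nat.lt_of_succ_lt h1⟩) (not_lt.mpr hcon.2)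
  · intro i i' hlt _ k h1 h2 hcon
    exact absurd (h i i' hlt ⟨k + 1, h1⟩ ⟨k, h2⟩) (not_lt.mpr hcon.1)

lemma key_Y {a : Fin n → ℕ} {T : Filling n n a} (h1 : RowsWeakIncr T)
    (h2 : FirstEntryRowIndex T) (h3 : RowsSeparated T) (k : ℕ) :
    ew T k ≤ psum a k ∧
      ∀ (hk : k < n), a ⟨k, hk⟩ ≠ 0 →
        ew T k = psum a k ∧ psum a k + 1 ≤ ew T (k + 1) := by
  classical
  have hA : ∀ m : ℕ, psum a m
      = ((Finset.univ : Finset ((i : Fin n) × Fin (a i))).filter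
          (fun b => (b.1 : ℕ) < m)).card := by
    intro m; exact (card_boxes a (fun i => (i : ℕ) < m)).symm
  have hsub : ∀ m : ℕ,
      ((Finset.univ : Finset ((i : Fin n) × Fin (a i))).filter
        (fun b => ((T b : Fin n) : ℕ) < m))
      ⊆ Finset.univ.filter (fun b => (b.1 : ℕ) < m) := by
    intro m b hb
    rw [Finset.mem_filter] at hb ⊢
    obtain ⟨bi, bj⟩ := b
    exact ⟨Finset.mem_univ _, lt_of_le_of_lt (entry_ge h1 h2 bi bj) hb.2⟩
  refine ⟨by rw [hA k]; exact Finset.card_le_card (hsub k), ?_⟩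
  intro hk hne
  have hp : 0 < a ⟨k, hk⟩ := Nat.pos_of_ne_zero hne
  have hmem : ∀ b : (i : Fin n) × Fin (a i),
      (b.1 : ℕ) < k → ((T b : Fin n) : ℕ) < k := by
    intro b hb
    obtain ⟨bi, bj⟩ := b
    have hs := h3 bi ⟨k, hk⟩ (by simpa [Fin.lt_def] using hb) bj ⟨0, hp⟩
    rw [h2 ⟨k, hk⟩ hp] at hs
    exact hs
  constructor
  · rw [hA k]
    refine le_antisymm (Finset.card_le_card (hsub k)) (Finset.card_le_card ?_)
    intro b hb
    rw [Finset.mem_filter] at hb ⊢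
    exact ⟨hb.1, hmem b hb.2⟩
  · have hnm : (⟨⟨k, hk⟩, ⟨0, hp⟩⟩ : (i : Fin n) × Fin (a i)) ∉
        Finset.univ.filter (fun b : (i : Fin n) × Fin (a i) => (b.1 : ℕ) < k) := by
      simp
    have hins : insert (⟨⟨k, hk⟩, ⟨0, hp⟩⟩ : (i : Fin n) × Fin (a i))
        (Finset.univ.filter (fun b : (i : Fin n) × Fin (a i) => (b.1 : ℕ) < k))
        ⊆ Finset.univ.filter (fun b => ((T b : Fin n) : ℕ) < k + 1) := by
      intro b hb
      rw [Finset.mem_insert] at hb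
      rw [Finset.mem_filter]
      refine ⟨Finset.mem_univ _, ?_⟩
      rcases hb with rfl | hb
      · rw [h2 ⟨k, hk⟩ hp]; simp
      · have := hmem b (Finset.mem_filter.mp hb).2; omega
    have hcard := Finset.card_le_card hins
    rw [Finset.card_insert_of_notMem hnm] at hcard
    rw [hA k]
    exact hcard

lemma key_D {a : Fin n → ℕ} {T : Filling n n a} (h1 : RowsWeakDecr T)
    (h2 : FirstEntryRowIndex T) (h3 : RowsSeparated T) (k : ℕ) :
    psum a k ≤ ew T k ∧
      ∀ (hk : k < n), a ⟨k, hk⟩ ≠ 0 →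
        ew T (k + 1) = psum a (k + 1) ∧ ew T k + 1 ≤ ew T (k + 1) := by
  classical
  have hA : ∀ m : ℕ, psum a m
      = ((Finset.univ : Finset ((i : Fin n) × Fin (a i))).filter
          (fun b => (b.1 : ℕ) < m)).card := by
    intro m; exact (card_boxes a (fun i => (i : ℕ) < m)).symm
  have hsub : ∀ m : ℕ,
      ((Finset.univ : Finset ((i : Fin n) × Fin (a i))).filter
        (fun b => (b.1 : ℕ) < m))
      ⊆ Finset.univ.filter (fun b => ((T b : Fin n) : ℕ) < m) := by
    intro m b hb
    rw [Finset.mem_filter] at hb ⊢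
    obtain ⟨bi, bj⟩ := b
    exact ⟨Finset.mem_univ _, lt_of_le_of_lt (entry_le h1 h2 bi bj) hb.2⟩
  refine ⟨by rw [hA k]; exact Finset.card_le_card (hsub k), ?_⟩
  intro hk hne
  have hp : 0 < a ⟨k, hk⟩ := Nat.pos_of_ne_zero hne
  constructor
  · rw [hA (k + 1)]
    refine le_antisymm (Finset.card_le_card ?_) (Finset.card_le_card (hsub (k + 1)))
    intro b hb
    rw [Finset.mem_filter] at hb ⊢
    refine ⟨Finset.mem_univ _, ?_⟩
    obtain ⟨bi, bj⟩ := b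
    by_contra hcon
    push_neg at hcon
    have hcon' : k + 1 ≤ (bi : ℕ) := hcon
    have hlt : (⟨k, hk⟩ : Fin n) < bi := by
      rw [Fin.lt_def]; exact hcon'
    have hs := h3 ⟨k, hk⟩ bi hlt ⟨0, hp⟩ bj
    rw [h2 ⟨k, hk⟩ hp] at hs
    have h5 : k < (T ⟨bi, bj⟩ : ℕ) := hs
    have h6 : (T ⟨bi, bj⟩ : ℕ) < k + 1 := hb.2
    omega
  · have hnm : (⟨⟨k, hk⟩, ⟨0, hp⟩⟩ : (i : Fin n) × Fin (a i)) ∉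
        Finset.univ.filter
          (fun b : (i : Fin n) × Fin (a i) => ((T b : Fin n) : ℕ) < k) := by
      rw [Finset.mem_filter, h2 ⟨k, hk⟩ hp]
      simp
    have hins : insert (⟨⟨k, hk⟩, ⟨0, hp⟩⟩ : (i : Fin n) × Fin (a i))
        (Finset.univ.filter
          (fun b : (i : Fin n) × Fin (a i) => ((T b : Fin n) : ℕ) < k))
        ⊆ Finset.univ.filter (fun b => ((T b : Fin n) : ℕ) < k + 1) := by
      intro b hb
      rw [Finset.mem_insert] at hb
      rw [Finset.mem_filter]
      refine ⟨Finset.mem_univ _, ?_⟩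
      rcases hb with rfl | hb
      · rw [h2 ⟨k, hk⟩ hp]; simp
      · have := (Finset.mem_filter.mp hb).2; omega
    have hcard := Finset.card_le_card hins
    rw [Finset.card_insert_of_notMem hnm] at hcard
    exact hcard

lemma coeff_genfun {c : Fin n → ℕ} (P : Filling n n c → Prop) (e : Fin n →₀ ℕ) :
    MvPolynomial.coeff e (genfun c P)
      = ((Finset.univ.filter (fun T : Filling n n c => P T ∧ wgt T = e)).card : ℤ) := by
  classical
  unfold genfun
  rw [MvPolynomial.coeff_sum]
  rw [Finset.sum_congr rfl (fun T _ => by rw [fmono_eq, MvPolynomial.coeff_monomial])]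
  rw [Finset.sum_boole, Finset.filter_filter]

lemma exists_wgt_iff {c d : Fin n → ℕ} {P : Filling n n c → Prop}
    {Q : Filling n n d → Prop} (h : genfun c P = genfun d Q) (e : Fin n →₀ ℕ) :
    (∃ T, P T ∧ wgt T = e) ↔ (∃ T, Q T ∧ wgt T = e) := by
  classical
  have h2 := congrArg (MvPolynomial.coeff e) h
  rw [coeff_genfun, coeff_genfun] at h2
  have h3 : (Finset.univ.filter (fun T : Filling n n c => P T ∧ wgt T = e)).card
      = (Finset.univ.filter (fun T : Filling n n d => Q T ∧ wgt T = e)).card := by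
    exact_mod_cast h2
  constructor
  · rintro ⟨T, hT⟩
    have hne : (Finset.univ.filter (fun T : Filling n n d => Q T ∧ wgt T = e)).Nonempty := by
      rw [← Finset.card_pos, ← h3, Finset.card_pos]
      exact ⟨T, Finset.mem_filter.mpr ⟨Finset.mem_univ _, hT⟩⟩
    obtain ⟨T', hT'⟩ := hne
    exact ⟨T', (Finset.mem_filter.mp hT').2⟩
  · rintro ⟨T, hT⟩
    have hne : (Finset.univ.filter (fun T : Filling n n c => P T ∧ wgt T = e)).Nonempty := by
      rw [← Finset.card_pos, h3, Finset.card_pos]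
      exact ⟨T, Finset.mem_filter.mpr ⟨Finset.mem_univ _, hT⟩⟩
    obtain ⟨T', hT'⟩ := hne
    exact ⟨T', (Finset.mem_filter.mp hT').2⟩

/-- The constant filling: each box of row `i` is filled with `i`. -/
def T0 (c : Fin n → ℕ) : Filling n n c := fun b => b.1

lemma T0_incr (c : Fin n → ℕ) : RowsWeakIncr (T0 c) := fun _ _ _ _ => le_refl _
lemma T0_decr (c : Fin n → ℕ) : RowsWeakDecr (T0 c) := fun _ _ _ _ => le_refl _
lemma T0_first (c : Fin n → ℕ) : FirstEntryRowIndex (T0 c) := fun _ _ => rfl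
lemma T0_sep (c : Fin n → ℕ) : RowsSeparated (T0 c) := fun _ _ h _ _ => h

lemma wgt_T0 (c : Fin n → ℕ) (v : Fin n) : wgt (T0 c) v = c v := by
  classical
  rw [wgt_apply]
  have h : ((Finset.univ : Finset ((i : Fin n) × Fin (c i))).filter
      (fun b => T0 c b = v)).card
      = ∑ i : Fin n, if i = v then c i else 0 := by convert card_boxes c (fun i => i = v); rfl
  rw [h, Finset.sum_ite_eq' Finset.univ v c, if_pos (Finset.mem_univ _)]

lemma fmono_T0 (c : Fin n → ℕ) :
    fmono (T0 c) = ∏ i : Fin n, MvPolynomial.X i ^ c i := by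
  unfold fmono
  rw [← Finset.univ_sigma_univ, Finset.prod_sigma]
  refine Finset.prod_congr rfl fun i _ => ?_
  show (∏ _s : Fin (c i), (MvPolynomial.X i : MvPolynomial (Fin n) ℤ)) = _
  rw [Finset.prod_const]
  simp

lemma YLF_unique {a : Fin n → ℕ}
    (hc : ∀ (i : ℕ) (h : i + 1 < n), ¬ (2 ≤ a ⟨i, Nat.lt_of_succ_lt h⟩ ∧ a ⟨i + 1, h⟩ = 0))
    {T : Filling n n a} (h1 : RowsWeakIncr T) (h2 : FirstEntryRowIndex T)
    (h3 : RowsSeparated T) : T = T0 a := by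
  funext b
  obtain ⟨i, j⟩ := b
  have hp : 0 < a i := Nat.lt_of_le_of_lt (Nat.zero_le _) j.isLt
  have hge : (i : ℕ) ≤ (T ⟨i, j⟩ : ℕ) := entry_ge h1 h2 i j
  have hle : (T ⟨i, j⟩ : ℕ) ≤ (i : ℕ) := by
    by_contra hcon
    push_neg at hcon
    have ha2 : 2 ≤ a i := by
      rcases Nat.eq_zero_or_pos (j : ℕ) with h0 | h0
      · exfalso
        have hj0 : j = ⟨0, hp⟩ := Fin.ext h0
        rw [hj0, h2 i hp] at hcon
        omega
      · have := j.isLt; omega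
    have hlt : (i : ℕ) + 1 < n := by have := (T ⟨i, j⟩).isLt; omega
    have hcnd := hc (i : ℕ) hlt
    have hne : a ⟨(i : ℕ) + 1, hlt⟩ ≠ 0 := by
      intro h0
      exact hcnd ⟨ha2, h0⟩
    have hp' : 0 < a ⟨(i : ℕ) + 1, hlt⟩ := Nat.pos_of_ne_zero hne
    have hs := h3 i ⟨(i : ℕ) + 1, hlt⟩ (by simp [Fin.lt_def]) j ⟨0, hp'⟩
    rw [h2 _ hp'] at hs
    have : (T ⟨i, j⟩ : ℕ) < (i : ℕ) + 1 := hs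
    omega
  exact Fin.ext (le_antisymm hle hge)

lemma LF_unique {a : Fin n → ℕ}
    (hc : ∀ (i : ℕ) (h : i + 1 < n), ¬ (a ⟨i, Nat.lt_of_succ_lt h⟩ = 0 ∧ 2 ≤ a ⟨i + 1, h⟩))
    {T : Filling n n a} (h1 : RowsWeakDecr T) (h2 : FirstEntryRowIndex T)
    (h3 : RowsSeparated T) : T = T0 a := by
  funext b
  obtain ⟨i, j⟩ := b
  have hp : 0 < a i := Nat.lt_of_le_of_lt (Nat.zero_le _) j.isLt
  have hle : (T ⟨i, j⟩ : ℕ) ≤ (i : ℕ) := entry_le h1 h2 i j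
  have hge : (i : ℕ) ≤ (T ⟨i, j⟩ : ℕ) := by
    by_contra hcon
    push_neg at hcon
    have hi1 : 1 ≤ (i : ℕ) := by omega
    have ha2 : 2 ≤ a i := by
      rcases Nat.eq_zero_or_pos (j : ℕ) with h0 | h0
      · exfalso
        have hj0 : j = ⟨0, hp⟩ := Fin.ext h0
        rw [hj0, h2 i hp] at hcon
        omega
      · have := j.isLt; omega
    have hlt : ((i : ℕ) - 1) + 1 < n := by have := i.isLt; omega
    have hcnd := hc ((i : ℕ) - 1) hlt
    have heq : (⟨(i : ℕ) - 1 + 1, hlt⟩ : Fin n) = i := Fin.ext (by simp; omega)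
    rw [heq] at hcnd
    have hne : a ⟨(i : ℕ) - 1, by omega⟩ ≠ 0 := fun h0 => hcnd ⟨h0, ha2⟩
    have hp' : 0 < a ⟨(i : ℕ) - 1, by omega⟩ := Nat.pos_of_ne_zero hne
    have hs := h3 ⟨(i : ℕ) - 1, by omega⟩ i (by rw [Fin.lt_def]; simp; omega) ⟨0, hp'⟩ j
    rw [h2 _ hp'] at hs
    have : (i : ℕ) - 1 < (T ⟨i, j⟩ : ℕ) := hs
    omega
  exact Fin.ext (le_antisymm hle hge)

lemma yfparticle_eq_prod {a : Fin n → ℕ}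
    (hc : ∀ (i : ℕ) (h : i + 1 < n), ¬ (2 ≤ a ⟨i, Nat.lt_of_succ_lt h⟩ ∧ a ⟨i + 1, h⟩ = 0)) :
    yfparticle n a = ∏ i : Fin n, MvPolynomial.X i ^ a i := by
  classical
  unfold yfparticle genfun
  rw [Finset.sum_filter, Finset.sum_eq_single (T0 a)]
  · rw [if_pos ⟨T0_incr a, sep_colsDistinct (T0_sep a), T0_first a,
      sep_triplesYoung (T0_sep a), T0_sep a⟩, fmono_T0]
  · intro T _ hne
    rw [if_neg]
    rintro ⟨hA, _, hC, _, hE⟩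
    exact hne (YLF_unique hc hA hC hE)
  · intro hmem
    exact absurd (Finset.mem_univ _) hmem

lemma fparticle_eq_prod {a : Fin n → ℕ}
    (hc : ∀ (i : ℕ) (h : i + 1 < n), ¬ (a ⟨i, Nat.lt_of_succ_lt h⟩ = 0 ∧ 2 ≤ a ⟨i + 1, h⟩)) :
    fparticle n a = ∏ i : Fin n, MvPolynomial.X i ^ a i := by
  classical
  unfold fparticle genfun
  rw [Finset.sum_filter, Finset.sum_eq_single (T0 a)]
  · rw [if_pos ⟨T0_decr a, sep_colsDistinct (T0_sep a), T0_first a,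
      sep_triplesAB (T0_sep a), T0_sep a⟩, fmono_T0]
  · intro T _ hne
    rw [if_neg]
    rintro ⟨hA, _, hC, _, hE⟩
    exact hne (LF_unique hc hA hC hE)
  · intro hmem
    exact absurd (Finset.mem_univ _) hmem

lemma gapY {a : Fin n → ℕ} {i : ℕ} (hi : i + 1 < n)
    (h2a : 2 ≤ a ⟨i, Nat.lt_of_succ_lt hi⟩) (h0 : a ⟨i + 1, hi⟩ = 0) :
    ∃ T : Filling n n a,
      (RowsWeakIncr T ∧ ColumnsDistinct T ∧ FirstEntryRowIndex T ∧
        TriplesYoung T ∧ RowsSeparated T) ∧ ew T (i + 1) + 1 = psum a (i + 1) := by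
  classical
  set I : Fin n := ⟨i, by omega⟩ with hI
  set I' : Fin n := ⟨i + 1, hi⟩ with hI'
  have h2a' : 2 ≤ a I := h2a
  have h0' : a I' = 0 := h0
  set T : Filling n n a :=
    (fun b => if b.1 = I ∧ (b.2 : ℕ) = a I - 1 then I' else b.1) with hT
  have hval : ∀ b : (r : Fin n) × Fin (a r),
      ¬ (b.1 = I ∧ (b.2 : ℕ) = a I - 1) → T b = b.1 := by
    intro b hb; rw [hT]; exact if_neg hb
  have hvalP : ∀ b : (r : Fin n) × Fin (a r),
      (b.1 = I ∧ (b.2 : ℕ) = a I - 1) → T b = I' := by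
    intro b hb; rw [hT]; exact if_pos hb
  have hsep : RowsSeparated T := by
    intro r r' hrr j j'
    have hv : (r : ℕ) < (r' : ℕ) := hrr
    by_cases hP : (r = I ∧ (j : ℕ) = a I - 1)
    · by_cases hQ : (r' = I ∧ (j' : ℕ) = a I - 1)
      · exact absurd (hP.1.trans hQ.1.symm) (ne_of_lt hrr)
      · rw [hvalP ⟨r, j⟩ hP, hval ⟨r', j'⟩ hQ]
        have hri : (r : ℕ) = i := by rw [hP.1]
        rcases Nat.lt_or_ge (i + 1) (r' : ℕ) with h | h
        · rw [Fin.lt_def]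
          simp only [hI']
          exact h
        · exfalso
          have hr'I : r' = I' := Fin.ext (by simp only [hI']; omega)
          have hj := j'.isLt
          have hc2 : a r' = a I' := congrArg a hr'I
          omega
    · by_cases hQ : (r' = I ∧ (j' : ℕ) = a I - 1)
      · rw [hval ⟨r, j⟩ hP, hvalP ⟨r', j'⟩ hQ]
        have hri : (r' : ℕ) = i := by rw [hQ.1]
        rw [Fin.lt_def]
        simp only [hI']
        omega
      · rw [hval ⟨r, j⟩ hP, hval ⟨r', j'⟩ hQ]
        exact hrr
  have hincr : RowsWeakIncr T := by
    intro r j j' hjj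
    have hv : (j : ℕ) ≤ (j' : ℕ) := hjj
    by_cases hP : (r = I ∧ (j : ℕ) = a I - 1)
    · by_cases hQ : (r = I ∧ (j' : ℕ) = a I - 1)
      · rw [hvalP ⟨r, j⟩ hP, hvalP ⟨r, j'⟩ hQ]
      · exfalso
        apply hQ
        refine ⟨hP.1, ?_⟩
        have hjlt : (j' : ℕ) < a I := by rw [← hP.1]; exact j'.isLt
        omega
    · by_cases hQ : (r = I ∧ (j' : ℕ) = a I - 1)
      · rw [hval ⟨r, j⟩ hP, hvalP ⟨r, j'⟩ hQ]
        rw [Fin.le_def]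
        have hri : (r : ℕ) = i := by rw [hQ.1]
        simp only [hI']
        omega
      · rw [hval ⟨r, j⟩ hP, hval ⟨r, j'⟩ hQ]
  have hfirst : FirstEntryRowIndex T := by
    intro r hpos
    apply hval ⟨r, ⟨0, hpos⟩⟩
    rintro ⟨-, hbad⟩
    simp only at hbad
    omega
  have hlti : a I - 1 < a I := by omega
  set sp : (r : Fin n) × Fin (a r) := ⟨I, ⟨a I - 1, hlti⟩⟩ with hsp
  have hTsp : T sp = I' := hvalP sp ⟨rfl, rfl⟩
  have hset : insert sp (Finset.univ.filter
        (fun b : (r : Fin n) × Fin (a r) => ((T b : Fin n) : ℕ) < i + 1))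
      = Finset.univ.filter (fun b : (r : Fin n) × Fin (a r) => (b.1 : ℕ) < i + 1) := by
    ext b
    simp only [Finset.mem_insert, Finset.mem_filter, Finset.mem_univ, true_and]
    constructor
    · rintro (rfl | hb)
      · show (sp.1 : ℕ) < i + 1
        rw [hsp]
        simp only [hI]
        omega
      · by_cases hc : (b.1 = I ∧ (b.2 : ℕ) = a I - 1)
        · rw [hc.1]
          simp only [hI]
          omega
        · rw [hval b hc] at hb
          exact hb
    · intro hb
      by_cases hc : (b.1 = I ∧ (b.2 : ℕ) = a I - 1)
      · left
        obtain ⟨r, j⟩ := b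
        obtain ⟨hc1, hc2⟩ := hc
        subst hc1
        rw [hsp]
        exact congrArg (Sigma.mk _) (Fin.ext hc2)
      · right
        rw [hval b hc]
        exact hb
  have hnm : sp ∉ (Finset.univ.filter
      (fun b : (r : Fin n) × Fin (a r) => ((T b : Fin n) : ℕ) < i + 1)) := by
    rw [Finset.mem_filter]
    rintro ⟨-, hbad⟩
    rw [hTsp] at hbad
    simp only [hI'] at hbad
    omega
  refine ⟨T, ⟨hincr, sep_colsDistinct hsep, hfirst, sep_triplesYoung hsep, hsep⟩, ?_⟩
  have hcard := congrArg Finset.card hset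
  rw [Finset.card_insert_of_notMem hnm] at hcard
  have hps : psum a (i + 1) = ((Finset.univ : Finset ((r : Fin n) × Fin (a r))).filter
      (fun b => (b.1 : ℕ) < i + 1)).card := by
    exact (card_boxes a (fun r => (r : ℕ) < i + 1)).symm
  rw [hps]
  exact hcard

lemma gapD {a : Fin n → ℕ} {i : ℕ} (hi : i + 1 < n)
    (h0 : a ⟨i, Nat.lt_of_succ_lt hi⟩ = 0) (h2a : 2 ≤ a ⟨i + 1, hi⟩) :
    ∃ T : Filling n n a,
      (RowsWeakDecr T ∧ ColumnsDistinct T ∧ FirstEntryRowIndex T ∧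
        TriplesAB T ∧ RowsSeparated T) ∧ ew T (i + 1) = psum a (i + 1) + 1 := by
  classical
  set I : Fin n := ⟨i, by omega⟩ with hI
  set I' : Fin n := ⟨i + 1, hi⟩ with hI'
  have h0' : a I = 0 := h0
  have h2a' : 2 ≤ a I' := h2a
  set T : Filling n n a :=
    (fun b => if b.1 = I' ∧ (b.2 : ℕ) = a I' - 1 then I else b.1) with hT
  have hval : ∀ b : (r : Fin n) × Fin (a r),
      ¬ (b.1 = I' ∧ (b.2 : ℕ) = a I' - 1) → T b = b.1 := by
    intro b hb; rw [hT]; exact if_neg hb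
  have hvalP : ∀ b : (r : Fin n) × Fin (a r),
      (b.1 = I' ∧ (b.2 : ℕ) = a I' - 1) → T b = I := by
    intro b hb; rw [hT]; exact if_pos hb
  have hsep : RowsSeparated T := by
    intro r r' hrr j j'
    have hv : (r : ℕ) < (r' : ℕ) := hrr
    by_cases hP : (r = I' ∧ (j : ℕ) = a I' - 1)
    · by_cases hQ : (r' = I' ∧ (j' : ℕ) = a I' - 1)
      · exact absurd (hP.1.trans hQ.1.symm) (ne_of_lt hrr)
      · rw [hvalP ⟨r, j⟩ hP, hval ⟨r', j'⟩ hQ]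
        have hri : (r : ℕ) = i + 1 := by rw [hP.1]
        rw [Fin.lt_def]
        simp only [hI]
        omega
    · by_cases hQ : (r' = I' ∧ (j' : ℕ) = a I' - 1)
      · rw [hval ⟨r, j⟩ hP, hvalP ⟨r', j'⟩ hQ]
        have hri : (r' : ℕ) = i + 1 := by rw [hQ.1]
        rw [Fin.lt_def]
        simp only [hI]
        rcases Nat.lt_or_ge (r : ℕ) i with h | h
        · exact h
        · exfalso
          have hrI : r = I := Fin.ext (by simp only [hI]; omega)
          have hj := j.isLt
          have hc2 : a r = a I := congrArg a hrI
          omega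
      · rw [hval ⟨r, j⟩ hP, hval ⟨r', j'⟩ hQ]
        exact hrr
  have hdecr : RowsWeakDecr T := by
    intro r j j' hjj
    have hv : (j : ℕ) ≤ (j' : ℕ) := hjj
    by_cases hQ : (r = I' ∧ (j' : ℕ) = a I' - 1)
    · by_cases hP : (r = I' ∧ (j : ℕ) = a I' - 1)
      · rw [hvalP ⟨r, j⟩ hP, hvalP ⟨r, j'⟩ hQ]
      · rw [hval ⟨r, j⟩ hP, hvalP ⟨r, j'⟩ hQ]
        rw [Fin.le_def]
        have hri : (r : ℕ) = i + 1 := by rw [hQ.1]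
        simp only [hI]
        omega
    · by_cases hP : (r = I' ∧ (j : ℕ) = a I' - 1)
      · exfalso
        apply hQ
        refine ⟨hP.1, ?_⟩
        have hjlt : (j' : ℕ) < a I' := by rw [← hP.1]; exact j'.isLt
        omega
      · rw [hval ⟨r, j⟩ hP, hval ⟨r, j'⟩ hQ]
  have hfirst : FirstEntryRowIndex T := by
    intro r hpos
    apply hval ⟨r, ⟨0, hpos⟩⟩
    rintro ⟨-, hbad⟩
    simp only at hbad
    omega
  have hlti : a I' - 1 < a I' := by omega
  set sp : (r : Fin n) × Fin (a r) := ⟨I', ⟨a I' - 1, hlti⟩⟩ with hsp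
  have hTsp : T sp = I := hvalP sp ⟨rfl, rfl⟩
  have hset : insert sp (Finset.univ.filter
        (fun b : (r : Fin n) × Fin (a r) => (b.1 : ℕ) < i + 1))
      = Finset.univ.filter
        (fun b : (r : Fin n) × Fin (a r) => ((T b : Fin n) : ℕ) < i + 1) := by
    ext b
    simp only [Finset.mem_insert, Finset.mem_filter, Finset.mem_univ, true_and]
    constructor
    · rintro (rfl | hb)
      · rw [hTsp]
        simp only [hI]
        omega
      · by_cases hc : (b.1 = I' ∧ (b.2 : ℕ) = a I' - 1)
        · exfalso
          rw [hc.1] at hb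
          simp only [hI'] at hb
          omega
        · rw [hval b hc]
          exact hb
    · intro hb
      by_cases hc : (b.1 = I' ∧ (b.2 : ℕ) = a I' - 1)
      · left
        obtain ⟨r, j⟩ := b
        obtain ⟨hc1, hc2⟩ := hc
        subst hc1
        rw [hsp]
        exact congrArg (Sigma.mk _) (Fin.ext hc2)
      · right
        rw [hval b hc] at hb
        exact hb
  have hnm : sp ∉ (Finset.univ.filter
      (fun b : (r : Fin n) × Fin (a r) => (b.1 : ℕ) < i + 1)) := by
    rw [Finset.mem_filter]
    rintro ⟨-, hbad⟩
    rw [hsp] at hbad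
    simp only [hI'] at hbad
    omega
  refine ⟨T, ⟨hdecr, sep_colsDistinct hsep, hfirst, sep_triplesAB hsep, hsep⟩, ?_⟩
  have hcard := congrArg Finset.card hset
  rw [Finset.card_insert_of_notMem hnm] at hcard
  have hps : psum a (i + 1) = ((Finset.univ : Finset ((r : Fin n) × Fin (a r))).filter
      (fun b => (b.1 : ℕ) < i + 1)).card := by
    exact (card_boxes a (fun r => (r : ℕ) < i + 1)).symm
  rw [hps]
  exact hcard.symm

lemma forward18 {a b : Fin n → ℕ} (h : yfparticle n a = fparticle n b) :
    a = b ∧ ∀ (i : ℕ) (hh : i + 1 < n),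
      ¬ (a ⟨i, Nat.lt_of_succ_lt hh⟩ = 0 ∧ 2 ≤ a ⟨i + 1, hh⟩) ∧
      ¬ (2 ≤ a ⟨i, Nat.lt_of_succ_lt hh⟩ ∧ a ⟨i + 1, hh⟩ = 0) := by
  classical
  have hgen : genfun (n := n) a (fun T =>
      RowsWeakIncr T ∧ ColumnsDistinct T ∧ FirstEntryRowIndex T ∧
        TriplesYoung T ∧ RowsSeparated T)
      = genfun (n := n) b (fun T =>
      RowsWeakDecr T ∧ ColumnsDistinct T ∧ FirstEntryRowIndex T ∧
        TriplesAB T ∧ RowsSeparated T) := h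
  have hiff := fun e => exists_wgt_iff hgen e
  obtain ⟨Ta, hTaP, hTaW⟩ := (hiff (wgt (T0 a))).mp
    ⟨T0 a, ⟨T0_incr a, sep_colsDistinct (T0_sep a), T0_first a,
      sep_triplesYoung (T0_sep a), T0_sep a⟩, rfl⟩
  obtain ⟨Tb, hTbP, hTbW⟩ := (hiff (wgt (T0 b))).mpr
    ⟨T0 b, ⟨T0_decr b, sep_colsDistinct (T0_sep b), T0_first b,
      sep_triplesAB (T0_sep b), T0_sep b⟩, rfl⟩
  have hewa : ∀ k, ew Ta k = psum a k := by
    intro k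
    rw [← psum_wgt, hTaW]
    unfold psum
    refine Finset.sum_congr rfl fun v _ => ?_
    simp only [wgt_T0]
  have hewb : ∀ k, ew Tb k = psum b k := by
    intro k
    rw [← psum_wgt, hTbW]
    unfold psum
    refine Finset.sum_congr rfl fun v _ => ?_
    simp only [wgt_T0]
  have KD := fun k => key_D hTaP.1 hTaP.2.2.1 hTaP.2.2.2.2 k
  have KY := fun k => key_Y hTbP.1 hTbP.2.2.1 hTbP.2.2.2.2 k
  have hab : a = b := by
    funext iF
    obtain ⟨k, hk⟩ := iF
    by_cases hA : a ⟨k, hk⟩ = 0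
    · by_cases hB : b ⟨k, hk⟩ = 0
      · rw [hA, hB]
      · exfalso
        have h1 := ((KD k).2 hk hB).2
        rw [hewa k, hewa (k + 1)] at h1
        rw [psum_succ a k hk, hA] at h1
        omega
    · have h1 := (KY k).2 hk hA
      rw [hewb k, hewb (k + 1)] at h1
      have e1 : psum b k = psum a k := h1.1
      have e2 : psum a k + 1 ≤ psum b (k + 1) := h1.2
      have hB : b ⟨k, hk⟩ ≠ 0 := by
        intro h0
        rw [psum_succ b k hk, h0, e1] at e2
        omega
      have h2 := ((KD k).2 hk hB).1
      rw [hewa (k + 1)] at h2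
      rw [psum_succ a k hk, psum_succ b k hk] at h2
      omega
  subst hab
  refine ⟨rfl, ?_⟩
  intro i hh
  constructor
  · rintro ⟨h0, h2⟩
    obtain ⟨T, hTP, hTew⟩ := gapD hh h0 h2
    obtain ⟨T', hT'P, hT'W⟩ := (hiff (wgt T)).mpr ⟨T, hTP, rfl⟩
    have hk := (key_Y hT'P.1 hT'P.2.2.1 hT'P.2.2.2.2 (i + 1)).1
    have hWW : ew T' (i + 1) = ew T (i + 1) := by
      rw [← psum_wgt T', ← psum_wgt T, hT'W]
    omega
  · rintro ⟨h2, h0⟩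
    obtain ⟨T, hTP, hTew⟩ := gapY hh h2 h0
    obtain ⟨T', hT'P, hT'W⟩ := (hiff (wgt T)).mp ⟨T, hTP, rfl⟩
    have hk := (key_D hT'P.1 hT'P.2.2.1 hT'P.2.2.2.2 (i + 1)).1
    have hWW : ew T' (i + 1) = ew T (i + 1) := by
      rw [← psum_wgt T', ← psum_wgt T, hT'W]
    omega

end Aux18


theorem yfparticle_eq_fparticle_iff (n : ℕ) (hn : 0 < n) (a b : Fin n → ℕ) :
    (yfparticle n a = fparticle n b ↔
      a = b ∧ ∀ (i : ℕ) (h : i + 1 < n),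
        ¬ (a ⟨i, by omega⟩ = 0 ∧ 2 ≤ a ⟨i + 1, h⟩) ∧
        ¬ (2 ≤ a ⟨i, by omega⟩ ∧ a ⟨i + 1, h⟩ = 0)) ∧
    ((∀ (i : ℕ) (h : i + 1 < n),
        ¬ (a ⟨i, by omega⟩ = 0 ∧ 2 ≤ a ⟨i + 1, h⟩) ∧
        ¬ (2 ≤ a ⟨i, by omega⟩ ∧ a ⟨i + 1, h⟩ = 0)) →
      yfparticle n a = fparticle n a ∧ fparticle n a = ∏ i : Fin n, X i ^ a i) := by
  constructor
  · constructor
    · exact fun h => forward18 h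
    · rintro ⟨rfl, hcond⟩
      rw [yfparticle_eq_prod (fun i h => (hcond i h).2),
        fparticle_eq_prod (fun i h => (hcond i h).1)]
  · intro hcond
    have h1 : fparticle n a = ∏ i : Fin n, X i ^ a i :=
      fparticle_eq_prod (fun i h => (hcond i h).1)
    have h2 : yfparticle n a = ∏ i : Fin n, X i ^ a i :=
      yfparticle_eq_prod (fun i h => (hcond i h).2)
    exact ⟨h2.trans h1.symm, h1⟩

end PaperYR
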